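/- Let G be a finite graph obtained from a graph G₀ by removing the two edges {v,x}, {v,y} and adding the edge {x,y}, where v, x, y ∈ V(G₀), x ≠ y, {x,y} ∉ E(G₀), d_{G₀}(v) ≤ 1/ρ, and d_{G₀}(x), d_{G₀}(y) ≤ 2/ρ with d_{G₀}(x), d_{G₀}(y) > 1/ρ. Let C be the connected component of G containing x and y. Then every contagious set A ⊆ V(C) for C with respect to ρ also infects V(C) in the original graph G₀. -/

import Mathlib

open Finset
open scoped Classical

variable {V : Type*}

/-- One step of the bootstrap percolation process in `G` with thresholds `φ`. -/
noncomputable def percStep [Fintype V] (G : SimpleGraph V) (φ : V → ℝ) (A : Finset V) :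
    Finset V :=
  A ∪ Finset.univ.filter fun v => φ v ≤ ((A.filter fun u => G.Adj v u).card : ℝ)

/-- `A` is a contagious set for `G` with respect to thresholds `φ`. -/
def Contagious [Fintype V] (G : SimpleGraph V) (φ : V → ℝ) (A : Finset V) : Prop :=
  ∃ k, (percStep G φ)^[k] A = Finset.univ

/-- The final infected set `H_{φ,G}(A)`. -/
noncomputable def percClosure [Fintype V] (G : SimpleGraph V) (φ : V → ℝ) (A : Finset V) :
    Finset V :=
  (percStep G φ)^[Fintype.card V] A

/-- `h_ρ(G)`: minimum size of a contagious set for ratio `ρ`. -/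
noncomputable def minContagious [Fintype V] (G : SimpleGraph V) (ρ : ℝ) : ℕ :=
  sInf {k | ∃ A : Finset V, A.card = k ∧ Contagious G (fun v => ρ * (G.degree v : ℝ)) A}


/-! Every vertex that the process in `C` infects in one step from `Y ⊆ X` is infected within two
steps of the process in `G₀` from `X`. Vertices other than `v, x, y` have the same neighbourhood
in both graphs. The vertex `v` needs only one infected neighbour in `G₀`, as `ρ d(v) ≤ 1`, and it
has a neighbour in `G` because it lies in the component of `x`. The vertex `x` keeps its degree,
and if its new neighbour `y` is infected, then the lost neighbour `v` is infected one step later,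
so `t ↦ if t = y then v else t` injects the infected `G`-neighbours of `x` into the infected
`G₀`-neighbours one step later; `y` is symmetric. Hence `Y_i ⊆ X_{2i}`. -/

open SimpleGraph

theorem Finset.iterate_subset_iterate_card {α : Type*} [Fintype α] {f : Finset α → Finset α}
    (hf : ∀ s, s ⊆ f s) (s : Finset α) (k : ℕ) :
    f^[k] s ⊆ f^[Fintype.card α] s := by
  set N := Fintype.card α
  have hmono : Monotone (f^[·] s) :=
    monotone_nat_of_le_succ fun n => by
      simpa only [Function.iterate_succ_apply'] using hf (f^[n] s)
  -- Along a strictly growing chain the cardinality would exceed `N` after `N + 1` steps.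
  obtain ⟨i, hiN, hfix⟩ : ∃ i ≤ N, f (f^[i] s) = f^[i] s := by
    by_contra! hgrow
    have hcard : ∀ i ≤ N + 1, i ≤ #(f^[i] s) := by
      intro i hi
      induction i with
      | zero => exact Nat.zero_le _
      | succ i ih =>
        have hlt := card_lt_card ((hf _).ssubset_of_ne (hgrow i (by omega)).symm)
        rw [Function.iterate_succ_apply']
        have := ih (by omega)
        omega
    have := card_le_univ (f^[N + 1] s)
    have := hcard (N + 1) le_rfl
    omega
  have hstable : ∀ n, i ≤ n → f^[n] s = f^[i] s := fun n hn => by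
    obtain ⟨j, rfl⟩ := Nat.exists_eq_add_of_le hn
    rw [add_comm, Function.iterate_add_apply, Function.iterate_fixed hfix]
  rcases le_total k N with hk | hk
  · exact hmono hk
  · rw [hstable k (hiN.trans hk), hstable N hiN]

theorem Function.map_iterate_le_iterate_mul {α β : Type*} [LE β] {f : α → α} {g : β → β}
    {h : α → β} {k : ℕ} (hfg : ∀ a b, h a ≤ b → h (f a) ≤ g^[k] b) {a : α} {b : β}
    (hab : h a ≤ b) (n : ℕ) : h (f^[n] a) ≤ g^[k * n] b := by
  induction n with
  | zero => exact hab
  | succ n ih =>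
    rw [Function.iterate_succ_apply', Nat.mul_succ, add_comm, Function.iterate_add_apply]
    exact hfg _ _ ih

section Percolation

variable [Fintype V] {G G' : SimpleGraph V} {φ φ' : V → ℝ} {X X' : Finset V} {z : V}

theorem mem_percStep_iff :
    z ∈ percStep G φ X ↔ z ∈ X ∨ φ z ≤ #{u ∈ X | G.Adj z u} := by
  simp [percStep]

theorem subset_percStep (G : SimpleGraph V) (φ : V → ℝ) (X : Finset V) :
    X ⊆ percStep G φ X :=
  subset_union_left

theorem percStep_mono (G : SimpleGraph V) (φ : V → ℝ) : Monotone (percStep G φ) := by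
  intro X X' hXX' z hz
  rw [mem_percStep_iff] at hz ⊢
  refine hz.imp (@hXX' z) fun hφ => hφ.trans ?_
  exact_mod_cast card_le_card (filter_subset_filter _ hXX')

theorem mem_percStep_of_adj {t : V} (ht : t ∈ X) (hadj : G.Adj z t) (hφ : φ z ≤ 1) :
    z ∈ percStep G φ X := by
  rw [mem_percStep_iff]
  refine Or.inr (hφ.trans ?_)
  exact_mod_cast card_pos.mpr ⟨t, mem_filter.mpr ⟨ht, hadj⟩⟩

theorem mem_percStep_of_card_le (hz : z ∈ percStep G φ X) (hXX' : X ⊆ X') (hφ : φ' z ≤ φ z)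
    (hcard : #{u ∈ X | G.Adj z u} ≤ #{u ∈ X' | G'.Adj z u}) :
    z ∈ percStep G' φ' X' := by
  rw [mem_percStep_iff] at hz ⊢
  refine hz.imp (@hXX' z) fun hz => ?_
  calc φ' z ≤ φ z := hφ
    _ ≤ #{u ∈ X | G.Adj z u} := hz
    _ ≤ #{u ∈ X' | G'.Adj z u} := by exact_mod_cast hcard

theorem iterate_percStep_subset_percClosure (G : SimpleGraph V) (φ : V → ℝ) (A : Finset V)
    (k : ℕ) : (percStep G φ)^[k] A ⊆ percClosure G φ A :=
  Finset.iterate_subset_iterate_card (subset_percStep G φ) A k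

theorem mem_percStep_of_mem_percStep_induce {s : Set V} [Fintype s] {Y : Finset s} {w : s}
    (hw : w ∈ percStep (G.induce s) (fun u => φ u) Y) :
    (w : V) ∈ percStep G φ (Y.image Subtype.val) := by
  rw [mem_percStep_iff] at hw ⊢
  refine hw.imp (mem_image_of_mem _) fun hw => hw.trans ?_
  refine Nat.cast_le.mpr (card_le_card_of_injOn Subtype.val (fun u hu => ?_)
    Subtype.val_injective.injOn)
  obtain ⟨huY, hadj⟩ := mem_filter.mp hu
  exact mem_filter.mpr ⟨mem_image_of_mem _ huY, hadj⟩

end Percolation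

namespace SimpleGraph

theorem degree_induce_supp [Fintype V] {G : SimpleGraph V} (c : G.ConnectedComponent)
    (w : c.supp) : (G.induce c.supp).degree w = G.degree w :=
  G.degree_induce_of_neighborSet_subset fun _ hu => c.mem_supp_of_adj_mem_supp w.2 hu

def edgeSwap (G₀ : SimpleGraph V) (v x y : V) : SimpleGraph V :=
  G₀.deleteEdges {s(v, x), s(v, y)} ⊔ fromEdgeSet {s(x, y)}

variable {G₀ : SimpleGraph V} {v x y b : V}

theorem edgeSwap_comm (G₀ : SimpleGraph V) (v x y : V) :
    G₀.edgeSwap v x y = G₀.edgeSwap v y x := by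
  rw [edgeSwap, edgeSwap, Set.pair_comm, Sym2.eq_swap (a := x)]

theorem edgeSwap_adj_iff_of_ne {a : V} (hav : a ≠ v) (hax : a ≠ x) (hay : a ≠ y) :
    (G₀.edgeSwap v x y).Adj a b ↔ G₀.Adj a b := by
  simp [edgeSwap, hav, hax, hay]

theorem edgeSwap_adj_center (hvx : v ≠ x) (hvy : v ≠ y) (h : (G₀.edgeSwap v x y).Adj v b) :
    G₀.Adj v b := by
  simp_all [edgeSwap]

theorem edgeSwap_adj_left_iff (hxv : x ≠ v) (hxy : x ≠ y) :
    (G₀.edgeSwap v x y).Adj x b ↔ G₀.Adj x b ∧ b ≠ v ∨ b = y := by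
  simp [edgeSwap, hxv, hxy]
  grind

theorem degree_edgeSwap_left [Fintype V] (hvx : G₀.Adj v x) (hxy : x ≠ y)
    (hnadj : ¬ G₀.Adj x y) : (G₀.edgeSwap v x y).degree x = G₀.degree x := by
  have hnbr : (G₀.edgeSwap v x y).neighborFinset x = insert y ((G₀.neighborFinset x).erase v) := by
    ext b
    simp [edgeSwap_adj_left_iff hvx.ne' hxy, and_comm, or_comm]
  have hv : v ∈ G₀.neighborFinset x := (G₀.mem_neighborFinset x v).mpr hvx.symm
  have hy : y ∉ (G₀.neighborFinset x).erase v := by simp [hnadj]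
  rw [← card_neighborFinset_eq_degree, ← card_neighborFinset_eq_degree, hnbr,
    card_insert_of_notMem hy, card_erase_add_one hv]

end SimpleGraph

section EdgeSwapPercolation

variable [Fintype V] {G₀ : SimpleGraph V} {ρ : ℝ} {v x y w : V} {X : Finset V}

theorem mem_percStep_of_mem_percStep_edgeSwap_of_ne (hwv : w ≠ v) (hwx : w ≠ x) (hwy : w ≠ y)
    (hw : w ∈ percStep (G₀.edgeSwap v x y) (fun z => ρ * (G₀.edgeSwap v x y).degree z) X) :
    w ∈ percStep G₀ (fun z => ρ * G₀.degree z) X := by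
  have hadj : ∀ b, (G₀.edgeSwap v x y).Adj w b ↔ G₀.Adj w b :=
    fun _ => edgeSwap_adj_iff_of_ne hwv hwx hwy
  have hdeg : (G₀.edgeSwap v x y).degree w = G₀.degree w := by
    simp only [← card_neighborFinset_eq_degree]
    congr 1
    ext b
    simp [hadj]
  refine mem_percStep_of_card_le hw subset_rfl (by rw [hdeg]) (le_of_eq ?_)
  simp only [hadj]

theorem mem_percStep_of_mem_percStep_edgeSwap_center (hρ : 0 < ρ) (hvx : v ≠ x) (hvy : v ≠ y)
    (hdv : ρ * G₀.degree v ≤ 1) (hpos : 0 < (G₀.edgeSwap v x y).degree v)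
    (hv : v ∈ percStep (G₀.edgeSwap v x y) (fun z => ρ * (G₀.edgeSwap v x y).degree z) X) :
    v ∈ percStep G₀ (fun z => ρ * G₀.degree z) X := by
  rcases mem_percStep_iff.mp hv with hvX | hcard
  · exact subset_percStep _ _ _ hvX
  obtain ⟨t, ht⟩ : {u ∈ X | (G₀.edgeSwap v x y).Adj v u}.Nonempty := by
    rw [← card_pos, ← Nat.cast_pos (α := ℝ)]
    exact (mul_pos hρ (Nat.cast_pos.mpr hpos)).trans_le hcard
  obtain ⟨htX, hadj⟩ := mem_filter.mp ht
  exact mem_percStep_of_adj htX (edgeSwap_adj_center hvx hvy hadj) hdv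

theorem mem_percStep_percStep_of_mem_percStep_edgeSwap_left (hvx : G₀.Adj v x)
    (hvy : G₀.Adj v y) (hxy : x ≠ y) (hnadj : ¬ G₀.Adj x y) (hdv : ρ * G₀.degree v ≤ 1)
    (hx : x ∈ percStep (G₀.edgeSwap v x y) (fun z => ρ * (G₀.edgeSwap v x y).degree z) X) :
    x ∈ percStep G₀ (fun z => ρ * G₀.degree z) (percStep G₀ (fun z => ρ * G₀.degree z) X) := by
  refine mem_percStep_of_card_le hx (subset_percStep _ _ _)
    (by rw [degree_edgeSwap_left hvx hxy hnadj]) ?_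
  have hadj : ∀ b, (G₀.edgeSwap v x y).Adj x b ↔ G₀.Adj x b ∧ b ≠ v ∨ b = y :=
    fun _ => edgeSwap_adj_left_iff hvx.ne' hxy
  refine card_le_card_of_injOn (fun t => if t = y then v else t) (fun t ht => ?_) ?_
  · obtain ⟨htX, htx⟩ := mem_filter.mp ht
    simp only [mem_coe]
    split_ifs with hty
    · subst hty
      exact mem_filter.mpr ⟨mem_percStep_of_adj htX hvy hdv, hvx.symm⟩
    · have := (hadj t).mp htx
      exact mem_filter.mpr ⟨subset_percStep _ _ _ htX, by tauto⟩
  · intro t₁ ht₁ t₂ ht₂ heq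
    simp only [coe_filter, Set.mem_ofPred_eq, hadj] at ht₁ ht₂
    dsimp only at heq
    split_ifs at heq <;> grind

theorem mem_percStep_percStep_of_mem_percStep_edgeSwap (hρ : 0 < ρ) (hvx : G₀.Adj v x)
    (hvy : G₀.Adj v y) (hxy : x ≠ y) (hnadj : ¬ G₀.Adj x y) (hdv : ρ * G₀.degree v ≤ 1)
    (hwx : (G₀.edgeSwap v x y).Reachable w x)
    (hw : w ∈ percStep (G₀.edgeSwap v x y) (fun z => ρ * (G₀.edgeSwap v x y).degree z) X) :
    w ∈ percStep G₀ (fun z => ρ * G₀.degree z) (percStep G₀ (fun z => ρ * G₀.degree z) X) := by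
  have hinfl := subset_percStep G₀ (fun z => ρ * G₀.degree z)
  rcases eq_or_ne w v with rfl | hwv
  · have hpos : 0 < (G₀.edgeSwap w x y).degree w := by
      obtain ⟨p⟩ := hwx
      cases p with
      | nil => exact absurd rfl hvx.ne
      | cons h _ => exact (degree_pos_iff_exists_adj _ _).mpr ⟨_, h⟩
    exact hinfl _ (mem_percStep_of_mem_percStep_edgeSwap_center hρ hvx.ne hvy.ne hdv hpos hw)
  rcases eq_or_ne w x with rfl | hwx
  · exact mem_percStep_percStep_of_mem_percStep_edgeSwap_left hvx hvy hxy hnadj hdv hw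
  rcases eq_or_ne w y with rfl | hwy
  · rw [edgeSwap_comm] at hw
    exact mem_percStep_percStep_of_mem_percStep_edgeSwap_left hvy hvx hxy.symm
      (fun h => hnadj h.symm) hdv hw
  exact hinfl _ (mem_percStep_of_mem_percStep_edgeSwap_of_ne hwv hwx hwy hw)

end EdgeSwapPercolation

theorem edge_swap_contagious_transfer_general [Fintype V] (G₀ : SimpleGraph V) (ρ : ℝ)
    (hρ : ρ ∈ Set.Ioc (0 : ℝ) 1) (v x y : V) (hxy : x ≠ y)
    (hvx : G₀.Adj v x) (hvy : G₀.Adj v y) (hnadj : ¬ G₀.Adj x y)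
    (hdv : (G₀.degree v : ℝ) ≤ 1 / ρ)
    (G : SimpleGraph V)
    (hGdef : G = G₀.deleteEdges {s(v, x), s(v, y)} ⊔ SimpleGraph.fromEdgeSet {s(x, y)})
    (A : Finset ↥(G.connectedComponentMk x).supp)
    (hA : Contagious (G.induce (G.connectedComponentMk x).supp)
      (fun w => ρ * ((G.induce (G.connectedComponentMk x).supp).degree w : ℝ)) A) :
    ∀ w ∈ (G.connectedComponentMk x).supp,
      w ∈ percClosure G₀ (fun z => ρ * (G₀.degree z : ℝ)) (A.image Subtype.val) := by
  change G = G₀.edgeSwap v x y at hGdef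
  subst hGdef
  have hdv' : ρ * G₀.degree v ≤ 1 := by
    rw [mul_comm, ← le_div_iff₀ hρ.1]
    exact hdv
  set C := (G₀.edgeSwap v x y).connectedComponentMk x
  have hsim : ∀ (Y : Finset C.supp) X, Y.image Subtype.val ⊆ X →
      (percStep ((G₀.edgeSwap v x y).induce C.supp)
        (fun w => ρ * (G₀.edgeSwap v x y).degree w) Y).image Subtype.val ⊆
        (percStep G₀ (fun z => ρ * G₀.degree z))^[2] X := by
    intro Y X hYX _ hu
    obtain ⟨w, hw, rfl⟩ := mem_image.mp hu
    exact mem_percStep_percStep_of_mem_percStep_edgeSwap hρ.1 hvx hvy hxy hnadj hdv'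
      (ConnectedComponent.exact w.2)
      (percStep_mono _ _ hYX (mem_percStep_of_mem_percStep_induce hw))
  simp only [degree_induce_supp] at hA
  obtain ⟨k, hk⟩ := hA
  intro w hw
  refine iterate_percStep_subset_percClosure _ _ _ (2 * k)
    (Function.map_iterate_le_iterate_mul hsim subset_rfl k ?_)
  rw [hk]
  exact mem_image_of_mem _ (mem_univ (⟨w, hw⟩ : C.supp))

/-- key step of Claim 2(ii): let `G` be obtained from `G₀` by deleting
the edges `{v,x}`, `{v,y}` and adding the edge `{x,y}`, where `d(v) ≤ 1/ρ` and
`1/ρ < d(x), d(y) ≤ 2/ρ`. If `C` is the component of `G` containing `x` and `y`,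
then every contagious set `A ⊆ V(C)` for `C` also infects `V(C)` in `G₀`. -/
theorem edge_swap_contagious_transfer [Fintype V] (G₀ : SimpleGraph V) (ρ : ℝ)
    (hρ : ρ ∈ Set.Ioc (0 : ℝ) 1) (v x y : V) (hxy : x ≠ y)
    (hvx : G₀.Adj v x) (hvy : G₀.Adj v y) (hnadj : ¬ G₀.Adj x y)
    (hdv : (G₀.degree v : ℝ) ≤ 1 / ρ)
    (hdx₁ : 1 / ρ < (G₀.degree x : ℝ)) (hdx₂ : (G₀.degree x : ℝ) ≤ 2 / ρ)
    (hdy₁ : 1 / ρ < (G₀.degree y : ℝ)) (hdy₂ : (G₀.degree y : ℝ) ≤ 2 / ρ)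
    (G : SimpleGraph V)
    (hGdef : G = G₀.deleteEdges {s(v, x), s(v, y)} ⊔ SimpleGraph.fromEdgeSet {s(x, y)})
    (A : Finset ↥(G.connectedComponentMk x).supp)
    (hA : Contagious (G.induce (G.connectedComponentMk x).supp)
      (fun w => ρ * ((G.induce (G.connectedComponentMk x).supp).degree w : ℝ)) A) :
    ∀ w ∈ (G.connectedComponentMk x).supp,
      w ∈ percClosure G₀ (fun z => ρ * (G₀.degree z : ℝ)) (A.image Subtype.val) :=
  edge_swap_contagious_transfer_general G₀ ρ hρ v x y hxy hvx hvy hnadj hdv G hGdef A hA
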